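/- arXiv:2105.01711 — 2 statements merged into one kernel-verified Lean document; each statement's English description precedes it below -/
import Mathlib

section
/- Fix r ≥ 1 and k ≥ 1 with |A| ≤ k. Let E_{>k} ⊆ Λ be the ideal generated by { e_m : m > k } and U ⊆ Λ the ideal generated by { uₙ : n ≥ 1 }. Then the ℚ-algebra homomorphism ℚ[x₁, …, x_k] → Λ/(U^r + E_{>k}) sending x_i to the class of E_i is surjective with kernel equal to the ideal (x₁, …, x_k)^r; in particular it induces an isomorphism ℚ[x₁, …, x_k]/(x₁, …, x_k)^r ≅ Λ/(U^r + E_{>k}), so the classes of the monomials E_ν, for ν an integer partition with at most k columns and fewer than r rows, form a ℚ-basis of Λ/(U^r + E_{>k}). -/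
noncomputable section

/-- The ring of symmetric functions, modelled as the polynomial ring `ℚ[p₁, p₂, …]`
in countably many variables indexed by positive integers (the power sums). -/
abbrev SymmFn : Type := MvPolynomial ℕ+ ℚ

/-- The power sum `pₙ` (for `n ≥ 1`; junk value `0` for `n = 0`). -/
def pSym (n : ℕ) : SymmFn :=
  if h : 0 < n then MvPolynomial.X (⟨n, h⟩ : ℕ+) else 0

/-- The elementary symmetric functions, defined by `e₀ = 1` and Newton's recursion
`n·eₙ = ∑_{i=1}^{n} (−1)^{i−1} pᵢ e_{n−i}`. -/
def eSym : ℕ → SymmFn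
  | 0 => 1
  | n + 1 =>
      ((n + 1 : ℚ))⁻¹ •
        ∑ j ∈ Finset.range (n + 1), ((-1 : ℚ) ^ j) • (pSym (j + 1) * eSym (n - j))
  termination_by n => n
  decreasing_by exact Nat.lt_succ_of_le (Nat.sub_le _ _)

/-- `∑_{d | n} d·a_d` as a rational number. -/
def divSum (a : ℕ →₀ ℕ) (n : ℕ) : ℚ :=
  ((∑ d ∈ n.divisors, d * a d : ℕ) : ℚ)

/-- `uₙ = pₙ − ∑_{d | n} d·a_d`. -/
def uSym (a : ℕ →₀ ℕ) (n : ℕ) : SymmFn :=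
  pSym n - MvPolynomial.C (divSum a n)

/-- The ideal `E_{>k}` of `Λ` generated by the `e_m` with `m > k`. -/
def Egt (k : ℕ) : Ideal SymmFn :=
  Ideal.span {x : SymmFn | ∃ m : ℕ, k < m ∧ x = eSym m}

/-- The ideal `U` of `Λ` generated by the `uₙ`, `n ≥ 1`. -/
def Uideal (a : ℕ →₀ ℕ) : Ideal SymmFn :=
  Ideal.span {x : SymmFn | ∃ n : ℕ, 0 < n ∧ x = uSym a n}

/-- The polynomial `∏_{i ≥ 1} (1 − tⁱ)^{a_i}` (a finite product). -/
def cPoly (a : ℕ →₀ ℕ) : Polynomial ℚ :=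
  ∏ i ∈ a.support, (1 - Polynomial.X ^ i) ^ a i

/-- `c_m`, the coefficient of `t^m` in `∏_{i ≥ 1} (1 − tⁱ)^{a_i}`. -/
def cCoeff (a : ℕ →₀ ℕ) (m : ℕ) : ℚ :=
  (cPoly a).coeff m

/-- `E_m := −(−1)^m e_m + c_m`. -/
def ESym (a : ℕ →₀ ℕ) (m : ℕ) : SymmFn :=
  (-(-1 : ℚ) ^ m) • eSym m + MvPolynomial.C (cCoeff a m)

/-- The `ℚ`-algebra homomorphism `ℚ[x₁, …, x_k] → Λ/(U^r + E_{>k})` sending `x_i` to the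
class of `E_i`. -/
def EQuotHom (a : ℕ →₀ ℕ) (r k : ℕ) :
    MvPolynomial (Fin k) ℚ →ₐ[ℚ] SymmFn ⧸ ((Uideal a) ^ r + Egt k) :=
  MvPolynomial.aeval fun i : Fin k =>
    Ideal.Quotient.mk ((Uideal a) ^ r + Egt k) (ESym a ((i : ℕ) + 1))

/-!
The eₘ are free polynomial generators of Λ as well (Newton's identities can be solved for
the pₙ), so an algebra map out of Λ may be prescribed freely on the eₘ.

The specialization pₙ ↦ ∑_{d ∣ n} d·a_d sends eₘ to (−1)^m c_m: the logarithmic derivative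
of C(t) = ∏ᵢ (1 − tⁱ)^{aᵢ} is t C'(t) = −C(t) ∑ₙ (∑_{d ∣ n} d·a_d) tⁿ, which is Newton's
recursion for the coefficients of C. As U is the kernel of this specialization, every Eₘ
lies in U.

Let ψ : Λ → ℚ[x₁, …, x_k] send eₘ to (−1)^m (c_m − x_m) for m ≤ k and to 0 for m > k.
Then ψ(Eᵢ) = xᵢ, so ψ is a retraction of xᵢ ↦ Eᵢ. Followed by evaluation at 0, ψ is the
specialization above (c_m = 0 for m > |A|), hence ψ(U) ⊆ (x₁, …, x_k); and ψ kills E_{>k}.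
Thus ψ maps U^r + E_{>k} into (x₁, …, x_k)^r, which bounds the kernel. Conversely,
xᵢ ↦ Eᵢ followed by ψ fixes every eₘ with m ≤ k, so it is the identity modulo
U^r + E_{>k}: this gives surjectivity.
-/

open Finset

theorem MvPolynomial.sub_C_aeval_mem_span_X_sub_C {R σ : Type*} [CommRing R] (v : σ → R)
    (g : MvPolynomial σ R) :
    g - C (aeval v g) ∈ Ideal.span (Set.range fun i => X i - C (v i)) := by
  set J := Ideal.span (Set.range fun i => (X i - C (v i) : MvPolynomial σ R))
  have hmk : Ideal.Quotient.mkₐ R J = (Ideal.Quotient.mkₐ R J).comp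
      ((Algebra.ofId R (MvPolynomial σ R)).comp (aeval v)) := by
    refine algHom_ext fun i => ?_
    simp only [AlgHom.comp_apply, aeval_X, Ideal.Quotient.mkₐ_eq_mk]
    exact Ideal.Quotient.eq.mpr (Ideal.subset_span ⟨i, rfl⟩)
  rw [← Ideal.Quotient.eq]
  exact DFunLike.congr_fun hmk g

namespace PowerSeries

variable {R : Type*} [CommRing R]

theorem X_mul_derivative_mul {f g s t : R⟦X⟧} (hf : X * d⁄dX R f = -(f * s))
    (hg : X * d⁄dX R g = -(g * t)) : X * d⁄dX R (f * g) = -(f * g * (s + t)) := by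
  rw [Derivation.leibniz, smul_eq_mul, smul_eq_mul]
  linear_combination g * hf + f * hg

theorem X_mul_derivative_pow {f s : R⟦X⟧} (hf : X * d⁄dX R f = -(f * s)) (m : ℕ) :
    X * d⁄dX R (f ^ m) = -(f ^ m * (m • s)) := by
  induction m with
  | zero => simp
  | succ m ih =>
    rw [pow_succ, X_mul_derivative_mul ih hf, succ_nsmul]

theorem one_sub_X_pow_mul_mk_mem_divisors {d : ℕ} (hd : d ≠ 0) :
    (1 - X ^ d) * mk (fun n => if d ∈ n.divisors then (1 : R) else 0) = X ^ d := by
  ext n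
  rw [sub_mul, one_mul, map_sub, coeff_X_pow_mul', coeff_mk, coeff_X_pow]
  simp only [coeff_mk, Nat.mem_divisors]
  by_cases hdn : d ≤ n
  · rw [if_pos hdn]
    rcases eq_or_ne n d with rfl | hne
    · simp [hd]
    · have hsub : d ∣ n - d ↔ d ∣ n := Nat.dvd_sub_iff_left hdn dvd_rfl
      simp [hsub, hne, show n ≠ 0 by omega, show n - d ≠ 0 by omega]
  · have : ¬ (d ∣ n ∧ n ≠ 0) := fun h => hdn (Nat.le_of_dvd (Nat.pos_of_ne_zero h.2) h.1)
    simp [hdn, this, show n ≠ d by omega]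

theorem X_mul_derivative_one_sub_X_pow (d : ℕ) :
    X * d⁄dX R (1 - X ^ d)
      = -((1 - X ^ d) * mk fun n => if d ∈ n.divisors then (d : R) else 0) := by
  rcases eq_or_ne d 0 with rfl | hd
  · simp
  have hmk : (mk fun n => if d ∈ n.divisors then (d : R) else 0)
      = d • mk fun n => if d ∈ n.divisors then (1 : R) else 0 := by
    ext n
    rw [map_nsmul, coeff_mk, coeff_mk, smul_ite, nsmul_one, smul_zero]
  rw [hmk, mul_smul_comm, one_sub_X_pow_mul_mk_mem_divisors hd, map_sub,
    Derivation.map_one_eq_zero, Derivation.leibniz_pow, derivative_X, zero_sub, smul_eq_mul,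
    mul_one, mul_neg, mul_smul_comm, ← pow_succ', Nat.sub_add_cancel (Nat.one_le_iff_ne_zero.2 hd)]

end PowerSeries

theorem cPoly_add (a b : ℕ →₀ ℕ) : cPoly (a + b) = cPoly a * cPoly b :=
  Finsupp.prod_add_index' (fun _ => pow_zero _) fun _ _ _ => pow_add _ _ _

theorem cPoly_single (d m : ℕ) : cPoly (Finsupp.single d m) = (1 - Polynomial.X ^ d) ^ m :=
  Finsupp.prod_single_index (pow_zero _)

theorem divSum_add (a b : ℕ →₀ ℕ) : divSum (a + b) = divSum a + divSum b := by
  funext n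
  simp [divSum, mul_add, sum_add_distrib]

theorem divSum_single (d m n : ℕ) :
    divSum (Finsupp.single d m) n = m • if d ∈ n.divisors then (d : ℚ) else 0 := by
  simp [divSum, Finsupp.single_apply, mul_comm]

theorem divSum_apply_zero (a : ℕ →₀ ℕ) : divSum a 0 = 0 := by
  simp [divSum]

open PowerSeries in
theorem X_mul_derivative_cPoly (a : ℕ →₀ ℕ) :
    X * d⁄dX ℚ (cPoly a : ℚ⟦X⟧) = -((cPoly a : ℚ⟦X⟧) * PowerSeries.mk (divSum a)) := by
  induction a using Finsupp.induction_linear with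
  | zero =>
    have : PowerSeries.mk (divSum 0) = 0 := by ext n; simp [divSum]
    simp [cPoly, this]
  | add a b ha hb =>
    rw [cPoly_add, Polynomial.coe_mul, X_mul_derivative_mul ha hb, divSum_add]
    congr 2
  | single d m =>
    convert X_mul_derivative_pow (X_mul_derivative_one_sub_X_pow (R := ℚ) d) m using 3
    · simp [cPoly_single]
    · simp [cPoly_single]
    · ext n
      rw [map_nsmul, coeff_mk, coeff_mk, divSum_single]

theorem succ_mul_cCoeff_succ (a : ℕ →₀ ℕ) (n : ℕ) :
    (n + 1 : ℚ) * cCoeff a (n + 1)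
      = -∑ j ∈ range (n + 1), divSum a (j + 1) * cCoeff a (n - j) := by
  have h := congrArg (PowerSeries.coeff (n + 1)) (X_mul_derivative_cPoly a)
  rw [PowerSeries.coeff_succ_X_mul, PowerSeries.coeff_derivative, map_neg,
    PowerSeries.coeff_mul, Nat.sum_antidiagonal_succ', ← Nat.sum_antidiagonal_swap] at h
  simp only [PowerSeries.coeff_mk, Polynomial.coeff_coe, divSum_apply_zero, mul_zero, zero_add,
    Prod.fst_swap, Prod.snd_swap] at h
  rw [Nat.sum_antidiagonal_eq_sum_range_succ
    (fun i j => (cPoly a).coeff j * divSum a (i + 1))] at h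
  simpa only [cCoeff, mul_comm] using h

theorem cCoeff_zero (a : ℕ →₀ ℕ) (ha0 : a 0 = 0) : cCoeff a 0 = 1 := by
  rw [cCoeff, Polynomial.coeff_zero_eq_eval_zero, cPoly, Polynomial.eval_prod]
  refine prod_eq_one fun i hi => ?_
  have hi0 : i ≠ 0 := by rintro rfl; exact Finsupp.mem_support_iff.mp hi ha0
  simp [hi0]

theorem natDegree_cPoly_le (a : ℕ →₀ ℕ) : (cPoly a).natDegree ≤ ∑ i ∈ a.support, i * a i := by
  refine (Polynomial.natDegree_prod_le _ _).trans (sum_le_sum fun i _ => ?_)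
  refine Polynomial.natDegree_pow_le.trans ?_
  rw [mul_comm]
  gcongr
  exact (Polynomial.natDegree_sub_le _ _).trans (by simp)

theorem cCoeff_eq_zero_of_lt (a : ℕ →₀ ℕ) {m : ℕ} (hm : ∑ i ∈ a.support, i * a i < m) :
    cCoeff a m = 0 :=
  Polynomial.coeff_eq_zero_of_natDegree_lt ((natDegree_cPoly_le a).trans_lt hm)

theorem pSym_coe (i : ℕ+) : pSym i = MvPolynomial.X i := by
  rw [pSym, dif_pos i.pos]
  rfl

theorem eSym_zero : eSym 0 = 1 := by
  rw [eSym]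

theorem succ_smul_eSym_succ (n : ℕ) :
    (n + 1 : ℚ) • eSym (n + 1)
      = ∑ j ∈ range (n + 1), (-1 : ℚ) ^ j • (pSym (j + 1) * eSym (n - j)) := by
  rw [eSym, smul_inv_smul₀ (by positivity)]

theorem pSym_mem_adjoin_range_eSym (n : ℕ) : pSym n ∈ Algebra.adjoin ℚ (Set.range eSym) := by
  induction n using Nat.strong_induction_on with
  | _ n ih =>
  rcases n with _ | n
  · simp [pSym]
  have hp : pSym (n + 1) = (-1 : ℚ) ^ n • ((n + 1 : ℚ) • eSym (n + 1)
      - ∑ j ∈ range n, (-1 : ℚ) ^ j • (pSym (j + 1) * eSym (n - j))) := by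
    rw [succ_smul_eSym_succ, sum_range_succ, Nat.sub_self, eSym_zero, mul_one,
      add_sub_cancel_left, smul_smul, ← mul_pow]
    norm_num
  have he : ∀ m, eSym m ∈ Algebra.adjoin ℚ (Set.range eSym) :=
    fun m => Algebra.subset_adjoin ⟨m, rfl⟩
  rw [hp]
  refine Subalgebra.smul_mem _ (sub_mem (Subalgebra.smul_mem _ (he _) _) ?_) _
  exact Subalgebra.sum_mem _ fun j hj =>
    Subalgebra.smul_mem _ (mul_mem (ih _ (by simp at hj; omega)) (he _)) _

theorem adjoin_range_eSym : Algebra.adjoin ℚ (Set.range eSym) = ⊤ := by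
  rw [eq_top_iff, ← MvPolynomial.adjoin_range_X, Algebra.adjoin_le_iff]
  rintro _ ⟨i, rfl⟩
  rw [SetLike.mem_coe, ← pSym_coe]
  exact pSym_mem_adjoin_range_eSym i

theorem algHom_ext_eSym {B : Type*} [Semiring B] [Algebra ℚ B] {f g : SymmFn →ₐ[ℚ] B}
    (h : ∀ m, f (eSym m) = g (eSym m)) : f = g :=
  AlgHom.ext_of_adjoin_eq_top adjoin_range_eSym <| by
    rintro _ ⟨m, rfl⟩
    exact h m

section Lift

variable {B : Type*} [CommRing B] [Algebra ℚ B]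

def newtonPowerSum (e : ℕ → B) : ℕ → B
  | 0 => 0
  | n + 1 => (-1 : ℚ) ^ n • ((n + 1 : ℚ) • e (n + 1)
      - ∑ j ∈ (range n).attach, (-1 : ℚ) ^ (j : ℕ) • (newtonPowerSum e (j + 1) * e (n - j)))
  decreasing_by have := mem_range.mp j.2; omega

theorem newtonPowerSum_succ (e : ℕ → B) (n : ℕ) :
    newtonPowerSum e (n + 1) = (-1 : ℚ) ^ n • ((n + 1 : ℚ) • e (n + 1)
      - ∑ j ∈ range n, (-1 : ℚ) ^ j • (newtonPowerSum e (j + 1) * e (n - j))) := by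
  rw [newtonPowerSum,
    sum_attach (range n) fun j => (-1 : ℚ) ^ j • (newtonPowerSum e (j + 1) * e (n - j))]

def liftESym (e : ℕ → B) : SymmFn →ₐ[ℚ] B :=
  MvPolynomial.aeval fun n : ℕ+ => newtonPowerSum e n

theorem liftESym_pSym (e : ℕ → B) {n : ℕ} (hn : 0 < n) :
    liftESym e (pSym n) = newtonPowerSum e n := by
  lift n to ℕ+ using hn
  rw [pSym_coe, liftESym, MvPolynomial.aeval_X]

theorem liftESym_eSym (e : ℕ → B) (he : e 0 = 1) (m : ℕ) : liftESym e (eSym m) = e m := by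
  induction m using Nat.strong_induction_on with
  | _ m ih =>
  rcases m with _ | n
  · rw [eSym_zero, map_one, he]
  refine smul_right_injective B (show (n + 1 : ℚ) ≠ 0 by positivity) ?_
  dsimp only
  rw [← map_smul, succ_smul_eSym_succ, map_sum, sum_range_succ]
  have hterm : ∀ j ∈ range (n + 1), liftESym e ((-1 : ℚ) ^ j • (pSym (j + 1) * eSym (n - j)))
      = (-1 : ℚ) ^ j • (newtonPowerSum e (j + 1) * e (n - j)) := fun j hj => by
    rw [map_smul, map_mul, liftESym_pSym e j.succ_pos, ih _ (by simp at hj; omega)]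
  rw [sum_congr rfl fun j hj => hterm j (mem_range.2 (by simp at hj; omega)),
    hterm n (self_mem_range_succ n), Nat.sub_self, he, mul_one, newtonPowerSum_succ, smul_smul,
    ← mul_pow]
  norm_num

end Lift

def specA (a : ℕ →₀ ℕ) : SymmFn →ₐ[ℚ] ℚ :=
  MvPolynomial.aeval fun n : ℕ+ => divSum a n

theorem specA_pSym (a : ℕ →₀ ℕ) {n : ℕ} (hn : 0 < n) : specA a (pSym n) = divSum a n := by
  lift n to ℕ+ using hn
  rw [pSym_coe, specA, MvPolynomial.aeval_X]

theorem specA_eSym (a : ℕ →₀ ℕ) (ha0 : a 0 = 0) (m : ℕ) :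
    specA a (eSym m) = (-1) ^ m * cCoeff a m := by
  induction m using Nat.strong_induction_on with
  | _ m ih =>
  rcases m with _ | n
  · rw [eSym_zero, map_one, pow_zero, one_mul, cCoeff_zero a ha0]
  refine mul_left_cancel₀ (show (n + 1 : ℚ) ≠ 0 by positivity) ?_
  calc (n + 1 : ℚ) * specA a (eSym (n + 1))
      = ∑ j ∈ range (n + 1),
          (-1) ^ j * (divSum a (j + 1) * ((-1) ^ (n - j) * cCoeff a (n - j))) := by
        rw [← smul_eq_mul, ← map_smul, succ_smul_eSym_succ, map_sum]
        refine sum_congr rfl fun j hj => ?_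
        rw [map_smul, map_mul, specA_pSym a j.succ_pos, ih _ (by simp at hj; omega), smul_eq_mul]
    _ = (-1) ^ n * ∑ j ∈ range (n + 1), divSum a (j + 1) * cCoeff a (n - j) := by
        rw [mul_sum]
        refine sum_congr rfl fun j hj => ?_
        rw [← Nat.add_sub_of_le (mem_range_succ_iff.mp hj), pow_add, Nat.add_sub_cancel_left]
        ring
    _ = (n + 1 : ℚ) * ((-1) ^ (n + 1) * cCoeff a (n + 1)) := by
        rw [← neg_neg (∑ j ∈ _, _), ← succ_mul_cCoeff_succ]
        ring

theorem specA_ESym (a : ℕ →₀ ℕ) (ha0 : a 0 = 0) (m : ℕ) : specA a (ESym a m) = 0 := by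
  rw [ESym, map_add, map_smul, specA_eSym a ha0, ← MvPolynomial.algebraMap_eq, AlgHom.commutes,
    Algebra.algebraMap_self, RingHom.id_apply, smul_eq_mul, neg_mul, ← mul_assoc, ← mul_pow]
  norm_num

theorem Uideal_eq_span (a : ℕ →₀ ℕ) :
    Uideal a
      = Ideal.span (Set.range fun i : ℕ+ => MvPolynomial.X i - MvPolynomial.C (divSum a i)) := by
  rw [Uideal]
  congr 1
  ext x
  constructor
  · rintro ⟨n, hn, rfl⟩
    lift n to ℕ+ using hn
    exact ⟨n, by rw [uSym, pSym_coe]⟩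
  · rintro ⟨i, rfl⟩
    exact ⟨i, i.pos, by rw [uSym, pSym_coe]⟩

theorem ESym_mem_Uideal (a : ℕ →₀ ℕ) (ha0 : a 0 = 0) (m : ℕ) : ESym a m ∈ Uideal a := by
  have h := MvPolynomial.sub_C_aeval_mem_span_X_sub_C (fun n : ℕ+ => divSum a n) (ESym a m)
  change ESym a m - MvPolynomial.C (specA a (ESym a m)) ∈ _ at h
  rwa [specA_ESym a ha0, map_zero, sub_zero, ← Uideal_eq_span] at h

section Retraction

open MvPolynomial

variable (a : ℕ →₀ ℕ) (k : ℕ)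

def retractEValue (m : ℕ) : MvPolynomial (Fin k) ℚ :=
  if m = 0 then 1
  else if h : m - 1 < k then (-1 : ℚ) ^ m • (C (cCoeff a m) - X ⟨m - 1, h⟩) else 0

def retractE : SymmFn →ₐ[ℚ] MvPolynomial (Fin k) ℚ :=
  liftESym (retractEValue a k)

theorem retractE_eSym (m : ℕ) : retractE a k (eSym m) = retractEValue a k m :=
  liftESym_eSym (retractEValue a k) (if_pos rfl) m

theorem retractE_eSym_of_lt {m : ℕ} (hm : k < m) : retractE a k (eSym m) = 0 := by
  rw [retractE_eSym, retractEValue, if_neg (by omega), dif_neg (by omega)]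

theorem retractE_ESym (i : Fin k) : retractE a k (ESym a (i + 1)) = X i := by
  rw [ESym, map_add, map_smul, retractE_eSym, ← MvPolynomial.algebraMap_eq, AlgHom.commutes,
    retractEValue, if_neg (by omega), dif_pos (by omega), smul_smul, neg_mul, ← mul_pow]
  simp [MvPolynomial.algebraMap_eq]

theorem aeval_zero_comp_retractE (ha0 : a 0 = 0) (hA : ∑ i ∈ a.support, i * a i ≤ k) :
    (aeval (0 : Fin k → ℚ)).comp (retractE a k) = specA a := by
  refine algHom_ext_eSym fun m => ?_
  rw [AlgHom.comp_apply, retractE_eSym, specA_eSym a ha0, retractEValue]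
  split_ifs with h0 hk
  · rw [h0, map_one, pow_zero, one_mul, cCoeff_zero a ha0]
  · simp
  · rw [map_zero, cCoeff_eq_zero_of_lt a (by omega), mul_zero]

theorem retractE_uSym_mem (ha0 : a 0 = 0) (hA : ∑ i ∈ a.support, i * a i ≤ k)
    {n : ℕ} (hn : 0 < n) :
    retractE a k (uSym a n) ∈ Ideal.span (Set.range (X : Fin k → MvPolynomial (Fin k) ℚ)) := by
  have h := sub_C_aeval_mem_span_X_sub_C (0 : Fin k → ℚ) (retractE a k (uSym a n))
  have hspec : specA a (uSym a n) = 0 := by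
    rw [uSym, map_sub, specA_pSym a hn, ← MvPolynomial.algebraMap_eq, AlgHom.commutes,
      Algebra.algebraMap_self, RingHom.id_apply, sub_self]
  rw [← AlgHom.comp_apply, aeval_zero_comp_retractE a k ha0 hA, hspec] at h
  simpa using h

def evalE : MvPolynomial (Fin k) ℚ →ₐ[ℚ] SymmFn :=
  aeval fun i : Fin k => ESym a (i + 1)

theorem retractE_comp_evalE : (retractE a k).comp (evalE a k) = AlgHom.id ℚ _ :=
  algHom_ext fun i => by rw [AlgHom.comp_apply, evalE, aeval_X, retractE_ESym, AlgHom.id_apply]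

theorem evalE_retractE_eSym {m : ℕ} (hm : m ≤ k) :
    evalE a k (retractE a k (eSym m)) = eSym m := by
  rw [retractE_eSym, retractEValue]
  split_ifs with h0 hk
  · rw [h0, map_one, eSym_zero]
  · rw [map_smul, map_sub, evalE, aeval_X, aeval_C, ESym, Nat.sub_add_cancel (by omega),
      MvPolynomial.algebraMap_eq, sub_add_cancel_right, smul_neg, smul_smul, mul_neg, ← mul_pow]
    simp
  · omega

theorem map_evalE_span_X_le (ha0 : a 0 = 0) :
    Ideal.map (evalE a k) (Ideal.span (Set.range X)) ≤ Uideal a := by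
  rw [Ideal.map_span, Ideal.span_le]
  rintro _ ⟨_, ⟨i, rfl⟩, rfl⟩
  rw [evalE, aeval_X]
  exact ESym_mem_Uideal a ha0 _

theorem map_retractE_le (ha0 : a 0 = 0) (hA : ∑ i ∈ a.support, i * a i ≤ k) (r : ℕ) :
    Ideal.map (retractE a k) (Uideal a ^ r + Egt k) ≤ Ideal.span (Set.range X) ^ r := by
  rw [Submodule.add_eq_sup, Ideal.map_sup, Ideal.map_pow]
  refine sup_le (Ideal.pow_right_mono ?_ r) ?_
  · rw [Uideal, Ideal.map_span, Ideal.span_le]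
    rintro _ ⟨_, ⟨n, hn, rfl⟩, rfl⟩
    exact retractE_uSym_mem a k ha0 hA hn
  · rw [Egt, Ideal.map_span, Ideal.span_le]
    rintro _ ⟨_, ⟨m, hm, rfl⟩, rfl⟩
    rw [SetLike.mem_coe, retractE_eSym_of_lt a k hm]
    exact zero_mem _

theorem EQuotHom_eq_comp (r : ℕ) :
    EQuotHom a r k = (Ideal.Quotient.mkₐ ℚ (Uideal a ^ r + Egt k)).comp (evalE a k) :=
  algHom_ext fun i => by
    rw [EQuotHom, aeval_X, AlgHom.comp_apply, evalE, aeval_X, Ideal.Quotient.mkₐ_eq_mk]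

theorem EQuotHom_comp_retractE (r : ℕ) :
    (EQuotHom a r k).comp (retractE a k) = Ideal.Quotient.mkₐ ℚ (Uideal a ^ r + Egt k) := by
  refine algHom_ext_eSym fun m => ?_
  rw [EQuotHom_eq_comp, AlgHom.comp_apply, AlgHom.comp_apply]
  rcases le_or_gt m k with hm | hm
  · rw [evalE_retractE_eSym a k hm]
  · rw [retractE_eSym_of_lt a k hm, map_zero, map_zero, eq_comm, Ideal.Quotient.mkₐ_eq_mk,
      Ideal.Quotient.eq_zero_iff_mem]
    exact Ideal.mem_sup_right (Ideal.subset_span ⟨m, hm, rfl⟩)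

theorem ker_EQuotHom (r : ℕ) :
    RingHom.ker (EQuotHom a r k) = (Uideal a ^ r + Egt k).comap (evalE a k) := by
  rw [EQuotHom_eq_comp, ← AlgHom.comap_ker, AlgHom.ker_coe, Ideal.Quotient.mkₐ_ker]

end Retraction

theorem EQuotHom_surjective_ker_general (a : ℕ →₀ ℕ) (ha0 : a 0 = 0) (r k : ℕ)
    (hA : ∑ i ∈ a.support, i * a i ≤ k) :
    Function.Surjective (EQuotHom a r k) ∧
      RingHom.ker (EQuotHom a r k) =
        (Ideal.span (Set.range (MvPolynomial.X : Fin k → MvPolynomial (Fin k) ℚ))) ^ r := by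
  refine ⟨fun y => ?_, le_antisymm ?_ ?_⟩
  · obtain ⟨g, rfl⟩ := Ideal.Quotient.mk_surjective y
    exact ⟨retractE a k g, DFunLike.congr_fun (EQuotHom_comp_retractE a k r) g⟩
  · rw [ker_EQuotHom]
    exact (Ideal.comap_le_map_of_inverse _ (retractE a k) _
      (DFunLike.congr_fun (retractE_comp_evalE a k))).trans (map_retractE_le a k ha0 hA r)
  · rw [ker_EQuotHom, ← Ideal.map_le_iff_le_comap, Ideal.map_pow]
    exact (Ideal.pow_right_mono (map_evalE_span_X_le a k ha0) r).trans
      (le_sup_left.trans (Submodule.add_eq_sup _ _).ge)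

/-- For `r, k ≥ 1` with `|A| ≤ k`, the homomorphism
`ℚ[x₁, …, x_k] → Λ/(U^r + E_{>k})`, `x_i ↦ [E_i]`, is surjective with kernel
`(x₁, …, x_k)^r`; in particular it induces an isomorphism
`ℚ[x₁, …, x_k]/(x₁, …, x_k)^r ≅ Λ/(U^r + E_{>k})`, so the classes of the monomials
`E_ν` (for `ν` with at most `k` columns and fewer than `r` rows) form a `ℚ`-basis. -/
theorem EQuotHom_surjective_ker (a : ℕ →₀ ℕ) (ha0 : a 0 = 0) (r k : ℕ)
    (hr : 1 ≤ r) (hk : 1 ≤ k) (hA : ∑ i ∈ a.support, i * a i ≤ k) :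
    Function.Surjective (EQuotHom a r k) ∧
      RingHom.ker (EQuotHom a r k) =
        (Ideal.span (Set.range (MvPolynomial.X : Fin k → MvPolynomial (Fin k) ℚ))) ^ r :=
  EQuotHom_surjective_ker_general a ha0 r k hA

end
end

section
/- Let F be a finite field with q elements and let V be an F-vector space of finite dimension n. Then in the polynomial ring ℤ[t], ∑_{W} μ(W, ⊤) · t^{n − dim W} = ∏_{i=0}^{n−1} (1 − qⁱ·t), where the sum is over all linear subspaces W of V, ⊤ = V is the top element of the subspace lattice, and μ is the Möbius function of the finite lattice of subspaces of V ordered by inclusion. (This is the Whitney polynomial of the subspace lattice B_q(n), which follows from the q-binomial theorem.) -/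
open scoped Classical

/-- The Möbius function of a finite partial order: `μ(x,x) = 1` and
`∑_{x ≤ z ≤ y} μ(x,z) = 0` for `x < y` (with `μ(x,y) = 0` when `x ≰ y`). -/
noncomputable def orderMoebius {α : Type*} [PartialOrder α] [Finite α] (x : α) : α → ℤ
  | y =>
    if x = y then 1
    else - ∑ᶠ z : {z : α // x ≤ z ∧ z < y}, orderMoebius x z.1
  termination_by y => Nat.card {w : α // w < y}
  decreasing_by
    rename_i z
    have hz : (z : α) < y := z.2.2
    have h3 : {w : α | w < (z : α)} ⊂ {w : α | w < y} :=
      ⟨fun w hw => lt_trans hw hz, fun h => lt_irrefl _ (h hz)⟩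
    exact Set.ncard_lt_ncard h3 (Set.toFinite _)

instance {α : Type*} [Finite α] : Finite (Setoid α) :=
  Finite.of_injective (fun s : Setoid α => s.r) fun s t h => by
    cases s; cases t; simp only at h; subst h; rfl

instance {F V : Type*} [Field F] [Fintype F] [AddCommGroup V] [Module F V]
    [FiniteDimensional F V] : Finite (Submodule F V) :=
  haveI : Finite V := Module.finite_of_finite F
  Finite.of_injective (fun W : Submodule F V => (W : Set V)) fun _ _ h =>
    SetLike.coe_injective h

/-!
Count the linear maps `K^m → V` by their range. Exactly `q^(m · dim W)` of them have range
inside `W`, so Möbius inversion in the subspace lattice gives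
`#{surjections} = ∑_W μ(W, V) q^(m · dim W)`. Transposition turns surjections `K^m → V` into
injections `V* → (K^m)*`, of which there are `∏_{i<n} (q^m - q^i)` when `n ≤ m`. Hence the
polynomials `∑_W μ(W, V) x^(dim W)` and `∏_{i<n} (x - q^i)` agree at the infinitely many points
`x = q^m`, and reversing their coefficients gives the statement.
-/

open Finset Module

theorem orderMoebius_eq_mu {α : Type*} [PartialOrder α] [Finite α] [LocallyFiniteOrder α]
    [DecidableEq α] (x y : α) : orderMoebius x y = IncidenceAlgebra.mu ℤ x y := by
  induction y using WellFoundedLT.induction with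
  | ind y ih =>
    rw [orderMoebius, IncidenceAlgebra.mu_apply]
    split_ifs
    · rfl
    · rw [finsum_subtype_eq_finsum_cond (fun z => x ≤ z ∧ z < y)]
      change -∑ᶠ z ∈ Set.Ico x y, orderMoebius x z = _
      rw [← Finset.coe_Ico, finsum_mem_coe_finset]
      exact congrArg _ (sum_congr rfl fun z hz => ih z (mem_Ico.mp hz).2)

theorem Nat.card_subtype_le_eq_sum_Iic {X α : Type*} [Finite X] [Preorder α]
    [LocallyFiniteOrderBot α] (f : X → α) (a : α) :
    Nat.card {x // f x ≤ a} = ∑ b ∈ Iic a, Nat.card {x // f x = b} := by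
  classical
  have := Fintype.ofFinite X
  simp only [Nat.card_eq_fintype_card, Fintype.card_subtype]
  rw [card_eq_sum_card_fiberwise (f := f) (t := Iic a) fun x hx => by simpa using hx]
  refine sum_congr rfl fun b hb => ?_
  rw [filter_filter]
  exact congrArg card (filter_congr fun x _ => and_iff_right_of_imp fun h => h ▸ mem_Iic.mp hb)

theorem Module.Basis.card_linearMap_range_le {ι R M V : Type*} [Finite ι] [CommSemiring R]
    [AddCommMonoid M] [Module R M] [AddCommMonoid V] [Module R V] (b : Basis ι R M)
    (W : Submodule R V) :
    Nat.card {φ : M →ₗ[R] V // LinearMap.range φ ≤ W} = Nat.card W ^ Nat.card ι := by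
  have e : {v : ι → V // ∀ i, v i ∈ W} ≃ {φ : M →ₗ[R] V // LinearMap.range φ ≤ W} :=
    (b.constr R).toEquiv.subtypeEquiv fun v => by
      simp [b.constr_range, Submodule.span_le, Set.range_subset_iff]
  rw [← Nat.card_congr (e.symm.trans Equiv.subtypePiEquivPi).symm, Nat.card_fun]

theorem Module.Dual.transpose_bijective {K P V : Type*} [Field K] [AddCommGroup P] [Module K P]
    [FiniteDimensional K P] [AddCommGroup V] [Module K V] [FiniteDimensional K V] :
    Function.Bijective (Dual.transpose (R := K) (M := P) (M' := V)) := by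
  have hinj : Function.Injective (Dual.transpose (R := K) (M := P) (M' := V)) :=
    fun f g h => (dualMap_dualMap_eq_iff K P).mp (congrArg LinearMap.dualMap h)
  refine ⟨hinj, (LinearMap.injective_iff_surjective_of_finrank_eq_finrank (K := K)
    (V := P →ₗ[K] V) (V₂ := Dual K V →ₗ[K] Dual K P) ?_).mp hinj⟩
  simp only [finrank_linearMap, finrank_self, mul_one, mul_comm]

theorem Module.Basis.injective_constr_iff {ι R M V : Type*} [CommRing R] [AddCommGroup M]
    [Module R M] [AddCommGroup V] [Module R V] (b : Basis ι R M) (v : ι → V) :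
    Function.Injective (b.constr R v) ↔ LinearIndependent R v := by
  refine ⟨fun h => ?_, b.injective_constr_of_linearIndependent (R₂ := R)⟩
  have := b.linearIndependent.map' _ (LinearMap.ker_eq_bot.mpr h)
  simpa [Function.comp_def] using this

section FiniteField

variable {K : Type*} [Field K] [Fintype K]

theorem card_injective_linearMap {V W : Type*} [AddCommGroup V] [Module K V]
    [FiniteDimensional K V] [AddCommGroup W] [Module K W] [FiniteDimensional K W]
    (h : finrank K V ≤ finrank K W) :
    Nat.card {g : V →ₗ[K] W // Function.Injective g} =
      ∏ i ∈ range (finrank K V), (Fintype.card K ^ finrank K W - Fintype.card K ^ i) := by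
  have : Finite W := Module.finite_of_finite K
  let b := Module.finBasis K V
  have e : {s : Fin (finrank K V) → W // LinearIndependent K s} ≃
      {g : V →ₗ[K] W // Function.Injective g} :=
    (b.constr K).toEquiv.subtypeEquiv fun s => (b.injective_constr_iff s).symm
  rw [← Nat.card_congr e, card_linearIndependent h, prod_range]

theorem card_surjective_linearMap {P V : Type*} [AddCommGroup P] [Module K P]
    [FiniteDimensional K P] [AddCommGroup V] [Module K V] [FiniteDimensional K V]
    (h : finrank K V ≤ finrank K P) :
    Nat.card {φ : P →ₗ[K] V // Function.Surjective φ} =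
      ∏ i ∈ range (finrank K V), (Fintype.card K ^ finrank K P - Fintype.card K ^ i) := by
  have e : {φ : P →ₗ[K] V // Function.Surjective φ} ≃
      {g : Dual K V →ₗ[K] Dual K P // Function.Injective g} :=
    (Equiv.ofBijective _ Dual.transpose_bijective).subtypeEquiv fun φ =>
      LinearMap.dualMap_injective_iff.symm
  rw [Nat.card_congr e, card_injective_linearMap (by simpa only [Subspace.dual_finrank_eq])]
  simp only [Subspace.dual_finrank_eq]

end FiniteField

namespace Polynomial

variable {R : Type*}

theorem reflect_sum_C_mul_X_pow {ι : Type*} [Semiring R] (s : Finset ι) (c : ι → R) (d : ι → ℕ)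
    {N : ℕ} (hd : ∀ i ∈ s, d i ≤ N) :
    reflect N (∑ i ∈ s, C (c i) * X ^ d i) = ∑ i ∈ s, C (c i) * X ^ (N - d i) := by
  classical
  induction s using Finset.induction_on with
  | empty => simp
  | insert j s hj ih =>
    rw [sum_insert hj, sum_insert hj, reflect_add, reflect_C_mul_X_pow,
      revAt_le (hd j (mem_insert_self j s)), ih fun i hi => hd i (mem_insert_of_mem hi)]

theorem reflect_prod_X_sub_C [CommRing R] [Nontrivial R] (a : ℕ → R) (n : ℕ) :
    reflect n (∏ i ∈ range n, (X - C (a i))) = ∏ i ∈ range n, (1 - C (a i) * X) := by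
  induction n with
  | zero => simp
  | succ n ih =>
    have hdeg : (∏ i ∈ range n, (X - C (a i))).natDegree ≤ n := by
      refine (natDegree_prod_le _ _).trans ?_
      simp
    rw [prod_range_succ, prod_range_succ, reflect_mul _ _ hdeg (natDegree_X_sub_C (a n)).le, ih,
      reflect_sub, reflect_one_X, reflect_C, pow_one]

end Polynomial

section SubspaceLattice

open Polynomial

variable {K V : Type*} [Field K] [Fintype K] [AddCommGroup V] [Module K V] [FiniteDimensional K V]
  [Fintype (Submodule K V)] [LocallyFiniteOrder (Submodule K V)]

theorem sum_mu_top_mul_pow_finrank {m : ℕ} (hm : finrank K V ≤ m) :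
    ∑ W : Submodule K V, IncidenceAlgebra.mu ℤ W ⊤ * ((Fintype.card K : ℤ) ^ m) ^ finrank K W =
      ∏ i ∈ range (finrank K V), ((Fintype.card K : ℤ) ^ m - (Fintype.card K : ℤ) ^ i) := by
  have : Finite ((Fin m → K) →ₗ[K] V) := Module.finite_of_finite K
  set f : Submodule K V → ℤ := fun U =>
    Nat.card {φ : (Fin m → K) →ₗ[K] V // LinearMap.range φ = U}
  have hg : ∀ W : Submodule K V,
      ((Fintype.card K : ℤ) ^ m) ^ finrank K W = ∑ U ∈ Iic W, f U := by
    intro W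
    have hcount := (Pi.basisFun K (Fin m)).card_linearMap_range_le W
    rw [Nat.card_subtype_le_eq_sum_Iic, natCard_eq_pow_finrank (K := K),
      Nat.card_eq_fintype_card (α := K), Nat.card_fin, ← pow_mul, mul_comm, pow_mul] at hcount
    simp only [f]
    exact_mod_cast hcount.symm
  have hsurj : f ⊤ = ∏ i ∈ range (finrank K V),
      ((Fintype.card K : ℤ) ^ m - (Fintype.card K : ℤ) ^ i) := by
    simp only [f, LinearMap.range_eq_top]
    rw [card_surjective_linearMap (by simpa using hm), finrank_fin_fun, Nat.cast_prod]
    refine prod_congr rfl fun i hi => ?_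
    rw [Nat.cast_sub (Nat.pow_le_pow_right Fintype.card_pos ((mem_range.mp hi).le.trans hm)),
      Nat.cast_pow, Nat.cast_pow]
  rw [← hsurj, IncidenceAlgebra.moebius_inversion_bot f _ hg ⊤, Iic_top]

theorem sum_C_mu_top_mul_X_pow_finrank :
    ∑ W : Submodule K V, C (IncidenceAlgebra.mu ℤ W ⊤) * X ^ finrank K W =
      ∏ i ∈ range (finrank K V), (X - C ((Fintype.card K : ℤ) ^ i)) := by
  have hq : 1 < (Fintype.card K : ℤ) := by exact_mod_cast Fintype.one_lt_card
  refine eq_of_infinite_eval_eq _ _ (Set.Infinite.mono ?_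
    ((Set.Ici_infinite (finrank K V)).image (pow_right_strictMono₀ hq).injective.injOn))
  rintro _ ⟨m, hm, rfl⟩
  simpa [eval_finsetSum, eval_prod, mul_comm] using sum_mu_top_mul_pow_finrank hm

end SubspaceLattice

/-- Whitney polynomial of the subspace lattice: for a finite field `F`
with `q` elements and an `n`-dimensional `F`-vector space `V`, in `ℤ[t]`,
`∑_W μ(W, ⊤) t^{n − dim W} = ∏_{i=0}^{n−1} (1 − qⁱ·t)`, the sum over all subspaces
`W ⊆ V`. -/
theorem whitney_polynomial_subspace_lattice {F V : Type*} [Field F] [Fintype F]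
    [AddCommGroup V] [Module F V] [FiniteDimensional F V] :
    ∑ᶠ W : Submodule F V,
        Polynomial.C (orderMoebius W (⊤ : Submodule F V)) *
          Polynomial.X ^ (Module.finrank F V - Module.finrank F W) =
      ∏ i ∈ Finset.range (Module.finrank F V),
        (1 - Polynomial.C ((Fintype.card F : ℤ) ^ i) * Polynomial.X) := by
  let _ : Fintype (Submodule F V) := Fintype.ofFinite _
  let _ : LocallyFiniteOrder (Submodule F V) := Fintype.toLocallyFiniteOrder
  simp_rw [finsum_eq_sum_of_fintype, orderMoebius_eq_mu]
  rw [← Polynomial.reflect_sum_C_mul_X_pow _ _ _ fun W _ => Submodule.finrank_le W,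
    sum_C_mu_top_mul_X_pow_finrank (K := F), Polynomial.reflect_prod_X_sub_C]
end
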